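/- Let A, B, Q, R, P, K be as follows: A an n×n real matrix, B an n×m real matrix, Q a symmetric positive semidefinite n×n real matrix, R a symmetric positive definite m×m real matrix, P a symmetric n×n real matrix satisfying Q + AᵀP + PA − PBR⁻¹BᵀP = 0, and K = R⁻¹BᵀP. Suppose x : ℝ → ℝⁿ is differentiable, u : ℝ → ℝᵐ is continuous, x′(t) = A·x(t) + B·u(t) for all t ≥ 0, the function t ↦ x(t)ᵀQ·x(t) + u(t)ᵀR·u(t) is integrable on [0,∞), and x(t)ᵀP·x(t) → 0 as t → ∞. Then ∫₀^∞ (x(t)ᵀQ·x(t) + u(t)ᵀR·u(t)) dt ≥ x(0)ᵀP·x(0). -/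

import Mathlib

/-!
Along any trajectory, completing the square with the Riccati equation gives
`d/dt (xᵀPx) + xᵀQx + uᵀRu = (u + Kx)ᵀR(u + Kx) ≥ 0` with `K = R⁻¹BᵀP`.
Integrating over `[0, T]` bounds `x(0)ᵀPx(0) - x(T)ᵀPx(T)` by the cost accumulated up to `T`;
let `T → ∞`.
-/

open Matrix Filter Topology Set MeasureTheory

variable {𝕜 ι κ : Type*} [Fintype ι] [Fintype κ]

theorem mulVec_dotProduct [CommSemiring 𝕜] (M : Matrix ι κ 𝕜) (a : κ → 𝕜)
    (b : ι → 𝕜) : (M *ᵥ a) ⬝ᵥ b = a ⬝ᵥ (Mᵀ *ᵥ b) := by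
  rw [dotProduct_comm, dotProduct_mulVec, mulVec_transpose, dotProduct_comm]

section Calculus

variable [NontriviallyNormedField 𝕜] {t : 𝕜}

theorem HasDerivAt.dotProduct {f g : 𝕜 → ι → 𝕜} {f' g' : ι → 𝕜}
    (hf : HasDerivAt f f' t) (hg : HasDerivAt g g' t) :
    HasDerivAt (fun s => f s ⬝ᵥ g s) (f' ⬝ᵥ g t + f t ⬝ᵥ g') t := by
  show HasDerivAt (fun s => ∑ i, f s i * g s i) (∑ i, f' i * g t i + ∑ i, f t i * g' i) t
  rw [← Finset.sum_add_distrib]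
  exact HasDerivAt.fun_sum fun i _ => (hasDerivAt_pi.mp hf i).mul (hasDerivAt_pi.mp hg i)

theorem HasDerivAt.mulVec [CompleteSpace 𝕜] (M : Matrix κ ι 𝕜) {f : 𝕜 → ι → 𝕜}
    {f' : ι → 𝕜} (hf : HasDerivAt f f' t) : HasDerivAt (fun s => M *ᵥ f s) (M *ᵥ f') t :=
  (LinearMap.toContinuousLinearMap M.mulVecLin).hasFDerivAt.comp_hasDerivAt t hf

end Calculus

theorem le_setIntegral_Ici_of_neg_deriv_le {V V' c : ℝ → ℝ} {a : ℝ}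
    (hV : ContinuousOn V (Ici a)) (hderiv : ∀ t > a, HasDerivAt V (V' t) t)
    (hc : IntegrableOn c (Ici a)) (hle : ∀ t > a, -V' t ≤ c t)
    (hlim : Tendsto V atTop (𝓝 0)) : V a ≤ ∫ t in Ici a, c t := by
  have hbound : ∀ T ≥ a, V a - V T ≤ ∫ t in a..T, c t := fun T hT => by
    have := intervalIntegral.sub_le_integral_of_hasDeriv_right_of_le hT
      (hV.neg.mono Icc_subset_Ici_self) (fun t ht => (hderiv t ht.1).neg.hasDerivWithinAt)
      (hc.mono_set Icc_subset_Ici_self) (fun t ht => hle t ht.1)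
    simp only [Pi.neg_apply] at this
    linarith
  have hleft : Tendsto (fun T => V a - V T) atTop (𝓝 (V a)) := by
    simpa using tendsto_const_nhds.sub hlim
  have hright := intervalIntegral_tendsto_integral_Ioi a (hc.mono_set Ioi_subset_Ici_self)
    tendsto_id
  rw [integral_Ici_eq_integral_Ioi]
  exact le_of_tendsto_of_tendsto hleft hright ((eventually_ge_atTop a).mono hbound)

theorem riccati_completing_square [DecidableEq κ] {A Q P : Matrix ι ι ℝ}
    {B : Matrix ι κ ℝ} {R : Matrix κ κ ℝ} (hR : R.IsSymm) (hRu : IsUnit R) (hP : P.IsSymm)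
    (hRic : Q + Aᵀ * P + P * A - P * B * R⁻¹ * Bᵀ * P = 0) (v : ι → ℝ) (w : κ → ℝ) :
    v ⬝ᵥ (Q *ᵥ v) + w ⬝ᵥ (R *ᵥ w)
        + ((A *ᵥ v + B *ᵥ w) ⬝ᵥ (P *ᵥ v) + v ⬝ᵥ (P *ᵥ (A *ᵥ v + B *ᵥ w)))
      = (w + (R⁻¹ * Bᵀ * P) *ᵥ v) ⬝ᵥ (R *ᵥ (w + (R⁻¹ * Bᵀ * P) *ᵥ v)) := by
  have hdet : IsUnit R.det := (isUnit_iff_isUnit_det R).mp hRu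
  have hKt : (R⁻¹ * Bᵀ * P)ᵀ = P * B * R⁻¹ := by
    rw [transpose_mul, transpose_mul, transpose_nonsing_inv, hR.eq, hP.eq, transpose_transpose,
      Matrix.mul_assoc]
  have hA : v ⬝ᵥ (Aᵀ * P) *ᵥ v + v ⬝ᵥ (P * A) *ᵥ v
      = v ⬝ᵥ (P * B * R⁻¹ * Bᵀ * P) *ᵥ v - v ⬝ᵥ Q *ᵥ v := by
    rw [← dotProduct_add, ← add_mulVec, ← dotProduct_sub, ← sub_mulVec]
    congr 2
    rw [← sub_eq_zero, ← hRic]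
    abel
  simp only [mulVec_add, add_dotProduct, dotProduct_add, mulVec_dotProduct, mulVec_mulVec,
    hKt, ← Matrix.mul_assoc, R.mul_nonsing_inv hdet, Matrix.one_mul,
    nonsing_inv_mul_cancel_right R _ hdet]
  linarith

theorem stmt_12_general (n m : ℕ) (A : Matrix (Fin n) (Fin n) ℝ)
    (B : Matrix (Fin n) (Fin m) ℝ) (Q : Matrix (Fin n) (Fin n) ℝ)
    (R : Matrix (Fin m) (Fin m) ℝ) (hR : R.IsSymm)
    (hRd : R.PosDef) (P : Matrix (Fin n) (Fin n) ℝ) (hP : P.IsSymm)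
    (hRic : Q + Aᵀ * P + P * A - P * B * R⁻¹ * Bᵀ * P = 0)
    (x : ℝ → Fin n → ℝ) (u : ℝ → Fin m → ℝ)
    (hxdiff : Differentiable ℝ x)
    (hode : ∀ t : ℝ, 0 ≤ t → deriv x t = A *ᵥ x t + B *ᵥ u t)
    (hint : MeasureTheory.IntegrableOn
      (fun t : ℝ => x t ⬝ᵥ (Q *ᵥ x t) + u t ⬝ᵥ (R *ᵥ u t)) (Set.Ici 0))
    (hlim : Filter.Tendsto (fun t : ℝ => x t ⬝ᵥ (P *ᵥ x t)) Filter.atTop (nhds 0)) :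
    x 0 ⬝ᵥ (P *ᵥ x 0) ≤ ∫ t in Set.Ici (0 : ℝ), (x t ⬝ᵥ (Q *ᵥ x t) + u t ⬝ᵥ (R *ᵥ u t)) := by
  have hV : ∀ t, HasDerivAt (fun s => x s ⬝ᵥ (P *ᵥ x s))
      (deriv x t ⬝ᵥ (P *ᵥ x t) + x t ⬝ᵥ (P *ᵥ deriv x t)) t := fun t =>
    (hxdiff t).hasDerivAt.dotProduct ((hxdiff t).hasDerivAt.mulVec P)
  refine le_setIntegral_Ici_of_neg_deriv_le (fun t _ => (hV t).continuousAt.continuousWithinAt)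
    (fun t _ => hV t) hint (fun t ht => ?_) hlim
  rw [hode t ht.le]
  have hsquare := riccati_completing_square hR hRd.isUnit hP hRic (x t) (u t)
  have hnonneg := hRd.posSemidef.dotProduct_mulVec_nonneg (u t + (R⁻¹ * Bᵀ * P) *ᵥ x t)
  simp only [star_trivial] at hnonneg
  linarith

theorem stmt_12 (n m : ℕ) (A : Matrix (Fin n) (Fin n) ℝ)
    (B : Matrix (Fin n) (Fin m) ℝ) (Q : Matrix (Fin n) (Fin n) ℝ) (hQ : Q.IsSymm)
    (hQsd : Q.PosSemidef) (R : Matrix (Fin m) (Fin m) ℝ) (hR : R.IsSymm)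
    (hRd : R.PosDef) (P : Matrix (Fin n) (Fin n) ℝ) (hP : P.IsSymm)
    (hRic : Q + Aᵀ * P + P * A - P * B * R⁻¹ * Bᵀ * P = 0)
    (K : Matrix (Fin m) (Fin n) ℝ) (hK : K = R⁻¹ * Bᵀ * P)
    (x : ℝ → Fin n → ℝ) (u : ℝ → Fin m → ℝ)
    (hxdiff : Differentiable ℝ x) (hucont : Continuous u)
    (hode : ∀ t : ℝ, 0 ≤ t → deriv x t = A *ᵥ x t + B *ᵥ u t)
    (hint : MeasureTheory.IntegrableOn
      (fun t : ℝ => x t ⬝ᵥ (Q *ᵥ x t) + u t ⬝ᵥ (R *ᵥ u t)) (Set.Ici 0))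
    (hlim : Filter.Tendsto (fun t : ℝ => x t ⬝ᵥ (P *ᵥ x t)) Filter.atTop (nhds 0)) :
    x 0 ⬝ᵥ (P *ᵥ x 0) ≤ ∫ t in Set.Ici (0 : ℝ), (x t ⬝ᵥ (Q *ᵥ x t) + u t ⬝ᵥ (R *ᵥ u t)) :=
  stmt_12_general n m A B Q R hR hRd P hP hRic x u hxdiff hode hint hlim
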